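/- For variables λ_1,...,λ_n over a field of characteristic 0 and any k with 1 ≤ k ≤ n-1, the identity Σ_{i=1}^{n} λ_i^k · ∂^k/∂λ_i^k V(λ_1,...,λ_n) = binom(n, k+1) · k! · V(λ_1,...,λ_n) holds, where V(λ_1,...,λ_n) = ∏_{i<j}(λ_j - λ_i) is the Vandermonde determinant. -/

import Mathlib

/-!
Expanding `V` as the Vandermonde determinant gives `V = ∑_σ sign σ • ∏ i, X (σ i) ^ i`, so the
exponent vector of every monomial of `V` is a permutation of `(0, 1, …, n - 1)`. The operator
`∑ i, X i ^ k * ∂ᵢ^k` is diagonal on monomials, multiplying `X^s` by `∑ i, (s i).descFactorial k`;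
on a permutation of `(0, …, n - 1)` this is `∑_{m < n} m.descFactorial k = k! * n.choose (k + 1)`
by the hockey-stick identity.
-/

open MvPolynomial Finset
open scoped Nat

theorem Nat.sum_range_descFactorial (n k : ℕ) :
    ∑ m ∈ range n, m.descFactorial k = k ! * n.choose (k + 1) := by
  induction n with
  | zero => simp
  | succ n ih =>
    rw [sum_range_succ, ih, Nat.descFactorial_eq_factorial_mul_choose, Nat.choose_succ_succ',
      mul_add, add_comm]

theorem Matrix.det_vandermonde_eq_prod_filter_lt {R : Type*} [CommRing R] {n : ℕ}
    (v : Fin n → R) :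
    (vandermonde v).det =
      ∏ p ∈ univ.filter (fun p : Fin n × Fin n => p.1 < p.2), (v p.2 - v p.1) := by
  rw [det_vandermonde, ← univ_product_univ, prod_filter, prod_product]
  refine prod_congr rfl fun i _ => ?_
  rw [← prod_filter, filter_lt_eq_Ioi]

namespace MvPolynomial

variable {R σ : Type*}

section CommSemiring

variable [CommSemiring R]

theorem iterate_pderiv_monomial (i : σ) (k : ℕ) (s : σ →₀ ℕ) (a : R) :
    (pderiv i)^[k] (monomial s a) =
      monomial (s - Finsupp.single i k) (a * (s i).descFactorial k) := by
  induction k with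
  | zero => simp
  | succ k ih =>
    rw [Function.iterate_succ_apply', ih, pderiv_monomial, Finsupp.tsub_apply,
      Finsupp.single_eq_same, tsub_tsub, ← Finsupp.single_add, Nat.descFactorial_succ]
    push_cast
    congr 1
    ring

theorem X_pow_mul_iterate_pderiv_monomial (i : σ) (k : ℕ) (s : σ →₀ ℕ) (a : R) :
    X i ^ k * (pderiv i)^[k] (monomial s a) = monomial s (a * (s i).descFactorial k) := by
  rw [iterate_pderiv_monomial, X_pow_eq_monomial, monomial_mul, one_mul]
  rcases le_or_gt k (s i) with h | h
  · rw [add_tsub_cancel_of_le (Finsupp.single_le_iff.mpr h)]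
  · simp [Nat.descFactorial_eq_zero_iff_lt.mpr h]

variable [Fintype σ]

noncomputable def eulerOperator (k : ℕ) : MvPolynomial σ R →ₗ[R] MvPolynomial σ R :=
  ∑ i, LinearMap.mulLeft R (X i ^ k) ∘ₗ (pderiv i).toLinearMap ^ k

theorem eulerOperator_apply (k : ℕ) (p : MvPolynomial σ R) :
    eulerOperator k p = ∑ i, X i ^ k * (pderiv i)^[k] p := by
  simp [eulerOperator, Module.End.pow_apply]

theorem eulerOperator_monomial (k : ℕ) (s : σ →₀ ℕ) (a : R) :
    eulerOperator k (monomial s a) = (∑ i, (s i).descFactorial k) • monomial s a := by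
  simp_rw [eulerOperator_apply, X_pow_mul_iterate_pderiv_monomial, ← map_sum, ← mul_sum,
    smul_monomial, nsmul_eq_mul, mul_comm, Nat.cast_sum]

end CommSemiring

variable [CommRing R] {n : ℕ}

/-- The exponent vector of `∏ i, X (e i) ^ i`, the `e`-th term of the Leibniz expansion. -/
noncomputable def permExponent (e : Equiv.Perm (Fin n)) : Fin n →₀ ℕ :=
  Finsupp.equivFunOnFinite.symm fun j => e.symm j

theorem det_vandermonde_X :
    (Matrix.vandermonde (X : Fin n → MvPolynomial (Fin n) R)).det =
      ∑ e : Equiv.Perm (Fin n), Equiv.Perm.sign e • monomial (permExponent e) 1 := by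
  rw [Matrix.det_apply]
  refine sum_congr rfl fun e _ => ?_
  congr 1
  simp only [Matrix.vandermonde_apply, permExponent, monomial_eq, C_1, one_mul,
    Finsupp.prod_fintype _ _ (fun _ => pow_zero _), Finsupp.coe_equivFunOnFinite_symm]
  rw [← Equiv.prod_comp e fun j => X j ^ (e.symm j : ℕ)]
  simp

theorem sum_descFactorial_permExponent (e : Equiv.Perm (Fin n)) (k : ℕ) :
    ∑ j, (permExponent e j).descFactorial k = k ! * n.choose (k + 1) := by
  simp only [permExponent, Finsupp.coe_equivFunOnFinite_symm]
  rw [Equiv.sum_comp e.symm fun i : Fin n => (i : ℕ).descFactorial k,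
    Fin.sum_univ_eq_sum_range (·.descFactorial k), Nat.sum_range_descFactorial]

theorem eulerOperator_det_vandermonde_X (k : ℕ) :
    eulerOperator k (Matrix.vandermonde (X : Fin n → MvPolynomial (Fin n) R)).det =
      (k ! * n.choose (k + 1)) • (Matrix.vandermonde X).det := by
  simp_rw [det_vandermonde_X, map_sum, Units.smul_def, map_zsmul, eulerOperator_monomial,
    sum_descFactorial_permExponent, smul_comm _ (_ : ℕ), ← smul_sum]

end MvPolynomial

theorem vandermonde_derivative_identity_general {F : Type*} [Field F]
    (n k : ℕ)
    (V : MvPolynomial (Fin n) F)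
    (hV : V = ∏ p ∈ Finset.univ.filter (fun p : Fin n × Fin n => p.1 < p.2),
      (MvPolynomial.X p.2 - MvPolynomial.X p.1)) :
    ∑ i, (MvPolynomial.X i) ^ k * ((MvPolynomial.pderiv i)^[k] V) =
      ((n.choose (k + 1) * Nat.factorial k : ℕ) : MvPolynomial (Fin n) F) * V := by
  rw [hV, ← Matrix.det_vandermonde_eq_prod_filter_lt, ← eulerOperator_apply,
    eulerOperator_det_vandermonde_X, nsmul_eq_mul, mul_comm k !]

theorem vandermonde_derivative_identity {F : Type*} [Field F] [CharZero F]
    (n k : ℕ) (hk : 1 ≤ k) (hkn : k ≤ n - 1)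
    (V : MvPolynomial (Fin n) F)
    (hV : V = ∏ p ∈ Finset.univ.filter (fun p : Fin n × Fin n => p.1 < p.2),
      (MvPolynomial.X p.2 - MvPolynomial.X p.1)) :
    ∑ i, (MvPolynomial.X i) ^ k * ((MvPolynomial.pderiv i)^[k] V) =
      ((n.choose (k + 1) * Nat.factorial k : ℕ) : MvPolynomial (Fin n) F) * V :=
  vandermonde_derivative_identity_general n k V hV
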